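/- The adjunction F_Q ⊣ U_Q is monadic: the comparison functor from AlgQ to the Eilenberg–Moore category of algebras for the monad T_Q = U_Q ∘ F_Q on sSet is an equivalence of categories. -/

import Mathlib

/-!
Common definitions for formalizing "Algebraic models for higher categories"
(T. Nikolaus, arXiv:1003.1342): algebraic Kan complexes, algebraic
quasi-categories, model structures, Quillen equivalences, local presentability,
anodyne maps, the fundamental ∞-groupoid and the reduced geometric realization.
-/

universe w₂ w v₂ v u₂ u

open CategoryTheory CategoryTheory.Limits Simplicial SSet

namespace AlgebraicModels

/-- The morphisms having the left lifting property against every morphism in `P`. -/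
def llp {C : Type u} [Category.{v} C] (P : MorphismProperty C) : MorphismProperty C :=
  fun _ _ f => ∀ ⦃X Y : C⦄ (g : X ⟶ Y), P g → HasLiftingProperty f g

/-- The morphisms having the right lifting property against every morphism in `P`. -/
def rlp {C : Type u} [Category.{v} C] (P : MorphismProperty C) : MorphismProperty C :=
  fun _ _ f => ∀ ⦃X Y : C⦄ (g : X ⟶ Y), P g → HasLiftingProperty g f

/-- The horn inclusions `Λ[n, i] ⟶ Δ[n]`, `n ≥ 1`, `0 ≤ i ≤ n`. -/
inductive hornInclusions : ∀ ⦃X Y : SSet.{0}⦄, (X ⟶ Y) → Prop where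
  | mk (n : ℕ) (hn : 1 ≤ n) (i : Fin (n + 1)) : hornInclusions ((Λ[n, i]).ι)

/-- The inner horn inclusions `Λ[n, i] ⟶ Δ[n]`, `0 < i < n` (hence `n ≥ 2`). -/
inductive innerHornInclusions : ∀ ⦃X Y : SSet.{0}⦄, (X ⟶ Y) → Prop where
  | mk (n : ℕ) (i : Fin (n + 1)) (h0 : 0 < i.val) (hn : i.val < n) :
      innerHornInclusions ((Λ[n, i]).ι)

/-- The boundary inclusions `∂Δ[n] ⟶ Δ[n]`. -/
inductive boundaryInclusions : ∀ ⦃X Y : SSet.{0}⦄, (X ⟶ Y) → Prop where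
  | mk (n : ℕ) : boundaryInclusions ((∂Δ[n]).ι)

/-- Anodyne maps: the weakly saturated class generated by the horn inclusions,
characterized (via the small object argument) as the maps having the left lifting
property against every map with the right lifting property against all horn
inclusions; these are the trivial cofibrations of the Kan–Quillen model structure. -/
def anodyne : MorphismProperty SSet.{0} := llp (rlp (fun _ _ f => hornInclusions f))

/-- Inner anodyne maps: the weakly saturated class generated by the inner horn
inclusions. -/
def innerAnodyne : MorphismProperty SSet.{0} :=
  llp (rlp (fun _ _ f => innerHornInclusions f))

/-- Kan fibrations: right lifting property against all horn inclusions. -/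
def kanFibration : MorphismProperty SSet.{0} := rlp (fun _ _ f => hornInclusions f)

/-- Trivial Kan fibrations: right lifting property against all boundary inclusions. -/
def trivialKanFibration : MorphismProperty SSet.{0} :=
  rlp (fun _ _ f => boundaryInclusions f)

/-- Weak homotopy equivalences of simplicial sets, characterized as the maps
factoring as an anodyne map followed by a trivial Kan fibration (this is exactly the
class of weak equivalences of the Kan–Quillen model structure on `SSet`). -/
def weakHomotopyEquiv : MorphismProperty SSet.{0} := fun X Y f =>
  ∃ (Z : SSet.{0}) (i : X ⟶ Z) (p : Z ⟶ Y), anodyne i ∧ trivialKanFibration p ∧ i ≫ p = f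

/-- An algebraic Kan complex: a simplicial set with a distinguished filler for every
horn `(Λ[n, i] : SSet.{0}) ⟶ X`, `n ≥ 1`, `0 ≤ i ≤ n`. -/
structure AlgKan : Type 1 where
  carrier : SSet.{0}
  filler : ∀ ⦃n : ℕ⦄ (i : Fin (n + 1)), 1 ≤ n → ((Λ[n, i] : SSet.{0}) ⟶ carrier) → (Δ[n] ⟶ carrier)
  filler_spec : ∀ ⦃n : ℕ⦄ (i : Fin (n + 1)) (hn : 1 ≤ n) (h : (Λ[n, i] : SSet.{0}) ⟶ carrier),
    (Λ[n, i]).ι ≫ filler i hn h = h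

namespace AlgKan

/-- Morphisms of algebraic Kan complexes: simplicial maps preserving the
distinguished fillers. -/
@[ext]
structure Hom (X Y : AlgKan) where
  map : X.carrier ⟶ Y.carrier
  preserves : ∀ ⦃n : ℕ⦄ (i : Fin (n + 1)) (hn : 1 ≤ n) (h : (Λ[n, i] : SSet.{0}) ⟶ X.carrier),
    X.filler i hn h ≫ map = Y.filler i hn (h ≫ map)

instance : Category.{0} AlgKan where
  Hom := Hom
  id X := ⟨𝟙 X.carrier, fun n i hn h => by simp⟩
  comp {X Y Z} f g := ⟨f.map ≫ g.map, fun n i hn h => by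
    rw [← Category.assoc, f.preserves, g.preserves, Category.assoc]⟩
  id_comp f := Hom.ext (Category.id_comp f.map)
  comp_id f := Hom.ext (Category.comp_id f.map)
  assoc f g h := Hom.ext (Category.assoc f.map g.map h.map)

@[simp] lemma id_map (X : AlgKan) : Hom.map (𝟙 X) = 𝟙 X.carrier := rfl

@[simp] lemma comp_map {X Y Z : AlgKan} (f : X ⟶ Y) (g : Y ⟶ Z) :
    Hom.map (f ≫ g) = f.map ≫ g.map := rfl

end AlgKan

/-- The forgetful functor from algebraic Kan complexes to simplicial sets. -/
def UA : AlgKan ⥤ SSet.{0} where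
  obj X := X.carrier
  map f := f.map

/-- An algebraic quasi-category: a simplicial set with a distinguished filler for
every inner horn `(Λ[n, i] : SSet.{0}) ⟶ X`, `0 < i < n`. -/
structure AlgQ : Type 1 where
  carrier : SSet.{0}
  filler : ∀ ⦃n : ℕ⦄ (i : Fin (n + 1)), 0 < i.val → i.val < n →
    ((Λ[n, i] : SSet.{0}) ⟶ carrier) → (Δ[n] ⟶ carrier)
  filler_spec : ∀ ⦃n : ℕ⦄ (i : Fin (n + 1)) (h0 : 0 < i.val) (hn : i.val < n)
    (h : (Λ[n, i] : SSet.{0}) ⟶ carrier), (Λ[n, i]).ι ≫ filler i h0 hn h = h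

namespace AlgQ

/-- Morphisms of algebraic quasi-categories: simplicial maps preserving the
distinguished fillers. -/
@[ext]
structure Hom (X Y : AlgQ) where
  map : X.carrier ⟶ Y.carrier
  preserves : ∀ ⦃n : ℕ⦄ (i : Fin (n + 1)) (h0 : 0 < i.val) (hn : i.val < n)
    (h : (Λ[n, i] : SSet.{0}) ⟶ X.carrier),
    X.filler i h0 hn h ≫ map = Y.filler i h0 hn (h ≫ map)

instance : Category.{0} AlgQ where
  Hom := Hom
  id X := ⟨𝟙 X.carrier, fun n i h0 hn h => by simp⟩
  comp {X Y Z} f g := ⟨f.map ≫ g.map, fun n i h0 hn h => by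
    rw [← Category.assoc, f.preserves, g.preserves, Category.assoc]⟩
  id_comp f := Hom.ext (Category.id_comp f.map)
  comp_id f := Hom.ext (Category.comp_id f.map)
  assoc f g h := Hom.ext (Category.assoc f.map g.map h.map)

@[simp] lemma id_map (X : AlgQ) : Hom.map (𝟙 X) = 𝟙 X.carrier := rfl

@[simp] lemma comp_map {X Y Z : AlgQ} (f : X ⟶ Y) (g : Y ⟶ Z) :
    Hom.map (f ≫ g) = f.map ≫ g.map := rfl

end AlgQ

/-- The forgetful functor from algebraic quasi-categories to simplicial sets. -/
def UQ : AlgQ ⥤ SSet.{0} where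
  obj X := X.carrier
  map f := f.map

/-- A (closed) model structure on a category: classes of weak equivalences,
cofibrations and fibrations on a complete and cocomplete category, satisfying
Quillen's axioms (two-out-of-three, closure under retracts, the lifting axioms
and the factorization axioms). -/
structure ModelStructure (C : Type u) [Category.{v} C] where
  weq : MorphismProperty C
  cof : MorphismProperty C
  fib : MorphismProperty C
  hasLimits : HasLimitsOfSize.{v, v} C
  hasColimits : HasColimitsOfSize.{v, v} C
  weq_comp : ∀ ⦃X Y Z : C⦄ (f : X ⟶ Y) (g : Y ⟶ Z), weq f → weq g → weq (f ≫ g)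
  weq_of_comp_left : ∀ ⦃X Y Z : C⦄ (f : X ⟶ Y) (g : Y ⟶ Z), weq f → weq (f ≫ g) → weq g
  weq_of_comp_right : ∀ ⦃X Y Z : C⦄ (f : X ⟶ Y) (g : Y ⟶ Z), weq g → weq (f ≫ g) → weq f
  weq_retract : ∀ ⦃X Y A B : C⦄ (f : X ⟶ Y) (g : A ⟶ B)
    (i : Arrow.mk f ⟶ Arrow.mk g) (r : Arrow.mk g ⟶ Arrow.mk f),
    i ≫ r = 𝟙 (Arrow.mk f) → weq g → weq f
  cof_retract : ∀ ⦃X Y A B : C⦄ (f : X ⟶ Y) (g : A ⟶ B)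
    (i : Arrow.mk f ⟶ Arrow.mk g) (r : Arrow.mk g ⟶ Arrow.mk f),
    i ≫ r = 𝟙 (Arrow.mk f) → cof g → cof f
  fib_retract : ∀ ⦃X Y A B : C⦄ (f : X ⟶ Y) (g : A ⟶ B)
    (i : Arrow.mk f ⟶ Arrow.mk g) (r : Arrow.mk g ⟶ Arrow.mk f),
    i ≫ r = 𝟙 (Arrow.mk f) → fib g → fib f
  lifting_trivCof_fib : ∀ ⦃A B X Y : C⦄ (i : A ⟶ B) (p : X ⟶ Y),
    cof i → weq i → fib p → HasLiftingProperty i p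
  lifting_cof_trivFib : ∀ ⦃A B X Y : C⦄ (i : A ⟶ B) (p : X ⟶ Y),
    cof i → fib p → weq p → HasLiftingProperty i p
  factor_trivCof_fib : ∀ ⦃X Y : C⦄ (f : X ⟶ Y), ∃ (Z : C) (i : X ⟶ Z) (p : Z ⟶ Y),
    cof i ∧ weq i ∧ fib p ∧ i ≫ p = f
  factor_cof_trivFib : ∀ ⦃X Y : C⦄ (f : X ⟶ Y), ∃ (Z : C) (i : X ⟶ Z) (p : Z ⟶ Y),
    cof i ∧ fib p ∧ weq p ∧ i ≫ p = f

namespace ModelStructure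

variable {C : Type u} [Category.{v} C] (M : ModelStructure C)

/-- The trivial cofibrations of a model structure. -/
def trivCof : MorphismProperty C := fun _ _ f => M.cof f ∧ M.weq f

/-- The trivial fibrations of a model structure. -/
def trivFib : MorphismProperty C := fun _ _ f => M.fib f ∧ M.weq f

/-- An object is fibrant iff every morphism from the source of a trivial cofibration
to it extends along the trivial cofibration (equivalently, the map to the terminal
object is a fibration). -/
def IsFibrant (X : C) : Prop :=
  ∀ ⦃A B : C⦄ (i : A ⟶ B), M.cof i → M.weq i → ∀ u : A ⟶ X, ∃ v : B ⟶ X, i ≫ v = u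

/-- An object is cofibrant iff every morphism from it lifts through any trivial
fibration (equivalently, the map from the initial object is a cofibration). -/
def IsCofibrant (X : C) : Prop :=
  ∀ ⦃E B : C⦄ (p : E ⟶ B), M.fib p → M.weq p → ∀ u : X ⟶ B, ∃ v : X ⟶ E, v ≫ p = u

/-- A model structure is cofibrantly generated by a class `I` of generating
cofibrations and a class `J` of generating trivial cofibrations if the cofibrations
are exactly `llp (rlp I)` and the trivial cofibrations are exactly `llp (rlp J)`. -/
def IsCofibrantlyGenerated (I J : MorphismProperty C) : Prop :=
  M.cof = llp (rlp I) ∧ M.trivCof = llp (rlp J)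

/-- Right properness: the pullback of a weak equivalence along a fibration is a weak
equivalence. -/
def RightProper : Prop :=
  ∀ ⦃X Y Z : C⦄ (f : X ⟶ Z) (g : Y ⟶ Z) (c : PullbackCone f g),
    IsLimit c → M.fib f → M.weq g → M.weq c.fst

end ModelStructure

/-- A Quillen adjunction, expressed through its left adjoint: the left adjoint
preserves cofibrations and trivial cofibrations. -/
def IsQuillenAdjunction {C : Type u} [Category.{v} C] {D : Type u₂} [Category.{v₂} D]
    (MC : ModelStructure C) (MD : ModelStructure D) (F : C ⥤ D) : Prop :=
  (∀ ⦃X Y : C⦄ (f : X ⟶ Y), MC.cof f → MD.cof (F.map f)) ∧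
  (∀ ⦃X Y : C⦄ (f : X ⟶ Y), MC.cof f → MC.weq f → MD.cof (F.map f) ∧ MD.weq (F.map f))

/-- A Quillen equivalence: a Quillen adjunction such that for every cofibrant `X` and
every fibrant `Y`, a map `F.obj X ⟶ Y` is a weak equivalence iff its adjunct
`X ⟶ G.obj Y` is a weak equivalence. -/
def IsQuillenEquivalence {C : Type u} [Category.{v} C] {D : Type u₂} [Category.{v₂} D]
    (MC : ModelStructure C) (MD : ModelStructure D)
    (F : C ⥤ D) (G : D ⥤ C) (adj : F ⊣ G) : Prop :=
  IsQuillenAdjunction MC MD F ∧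
  ∀ (X : C) (Y : D), MC.IsCofibrant X → MD.IsFibrant Y →
    ∀ f : F.obj X ⟶ Y, MD.weq f ↔ MC.weq ((adj.homEquiv X Y) f)

/-- A category is `κ`-filtered if every diagram of size `< κ` in it admits a cocone. -/
def IsCardinalFiltered (J : Type v) [Category.{v} J] (κ : Cardinal.{v}) : Prop :=
  ∀ (K : Type v) [Category.{v} K] (F : K ⥤ J),
    Cardinal.mk (Arrow K) < κ → Nonempty (Cocone F)

/-- An object `A` is `κ`-presentable (`κ`-small) if `Hom(A, -)` preserves `κ`-filtered
colimits. -/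
def IsPresentableObj {C : Type u} [Category.{v} C] (κ : Cardinal.{v}) (A : C) : Prop :=
  ∀ (J : Type v) [Category.{v} J], IsCardinalFiltered J κ →
    Nonempty (PreservesColimitsOfShape J (coyoneda.obj (Opposite.op A)))

/-- A category is locally presentable if it is cocomplete and there is a small family
of `κ`-presentable objects (for some regular cardinal `κ`) such that every object is a
`κ`-filtered colimit of objects of this family. -/
def IsLocallyPresentable (C : Type u) [Category.{v} C] : Prop :=
  HasColimitsOfSize.{v, v} C ∧
  ∃ κ : Cardinal.{v}, κ.IsRegular ∧
    ∃ (ι : Type v) (G : ι → C),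
      (∀ i, IsPresentableObj κ (G i)) ∧
      ∀ X : C, ∃ (J : Cat.{v, v}) (_ : IsCardinalFiltered J κ) (D : J ⥤ C) (c : Cocone D),
        (∀ j : J, ∃ i : ι, Nonempty (D.obj j ≅ G i)) ∧
        Nonempty (IsColimit c) ∧ Nonempty (c.pt ≅ X)

/-- The forgetful functor from algebraic Kan complexes to algebraic quasi-categories:
it forgets the distinguished fillers of the outer horns (and keeps those of the inner
horns), so that `V ⋙ UQ = UA`. -/
def V : AlgKan ⥤ AlgQ where
  obj X :=
    { carrier := X.carrier
      filler := fun n i h0 hn h => X.filler i (by omega) h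
      filler_spec := fun n i h0 hn h => X.filler_spec i (by omega) h }
  map {X Y} f :=
    { map := f.map
      preserves := fun n i h0 hn h => f.preserves i (by omega) h }
  map_id X := AlgQ.Hom.ext rfl
  map_comp f g := AlgQ.Hom.ext rfl

/-- The image `{ F.map (∂Δ[n] ⟶ Δ[n]) | n ≥ 1 }` of the boundary inclusions with
`n ≥ 1` under a functor `F : SSet ⥤ D`. -/
inductive imageBoundaryInclusions {D : Type u} [Category.{v} D] (F : SSet.{0} ⥤ D) :
    ∀ ⦃X Y : D⦄, (X ⟶ Y) → Prop where
  | mk (n : ℕ) (hn : 1 ≤ n) : imageBoundaryInclusions F (F.map ((∂Δ[n]).ι))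

/-- The image `{ F.map ((Λ[n, i] : SSet.{0}) ⟶ Δ[n]) | n ≥ 1, 0 ≤ i ≤ n }` of the horn inclusions
under a functor `F : SSet ⥤ D`. -/
inductive imageHornInclusions {D : Type u} [Category.{v} D] (F : SSet.{0} ⥤ D) :
    ∀ ⦃X Y : D⦄, (X ⟶ Y) → Prop where
  | mk (n : ℕ) (hn : 1 ≤ n) (i : Fin (n + 1)) :
      imageHornInclusions F (F.map ((Λ[n, i]).ι))

/-- The geometric realizations of the horn inclusions. -/
inductive topHornInclusions : ∀ ⦃X Y : TopCat.{0}⦄, (X ⟶ Y) → Prop where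
  | mk (n : ℕ) (hn : 1 ≤ n) (i : Fin (n + 1)) :
      topHornInclusions (SSet.toTop.map ((Λ[n, i]).ι))

/-- The geometric realizations of the boundary inclusions. -/
inductive topBoundaryInclusions : ∀ ⦃X Y : TopCat.{0}⦄, (X ⟶ Y) → Prop where
  | mk (n : ℕ) : topBoundaryInclusions (SSet.toTop.map ((∂Δ[n]).ι))

/-- Serre fibrations: right lifting property against the realized horn inclusions. -/
def serreFibration : MorphismProperty TopCat.{0} := rlp (fun _ _ f => topHornInclusions f)

/-- Trivial Serre fibrations. -/
def topTrivialFibration : MorphismProperty TopCat.{0} :=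
  rlp (fun _ _ f => topBoundaryInclusions f)

/-- Trivial cofibrations of the Quillen model structure on `Top`. -/
def topTrivialCofibration : MorphismProperty TopCat.{0} :=
  llp (rlp (fun _ _ f => topHornInclusions f))

/-- Weak homotopy equivalences of topological spaces, characterized as the maps
factoring as a trivial cofibration followed by a trivial fibration of the Quillen
model structure on `Top`. -/
def topWeakEquiv : MorphismProperty TopCat.{0} := fun X Y f =>
  ∃ (Z : TopCat.{0}) (i : X ⟶ Z) (p : Z ⟶ Y),
    topTrivialCofibration i ∧ topTrivialFibration p ∧ i ≫ p = f

/-- A choice, for every `n ≥ 1` and `0 ≤ i ≤ n`, of a continuous retraction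
`R(n,i) : |Δ[n]| ⟶ |Λ[n,i]|` of the inclusion of the geometric horn into the
geometric `n`-simplex. -/
structure HornRetractions where
  r : ∀ (n : ℕ) (i : Fin (n + 1)), 1 ≤ n → (SSet.toTop.obj Δ[n] ⟶ SSet.toTop.obj Λ[n, i])
  retraction : ∀ (n : ℕ) (i : Fin (n + 1)) (hn : 1 ≤ n),
    SSet.toTop.map ((Λ[n, i]).ι) ≫ r n i hn = 𝟙 (SSet.toTop.obj Λ[n, i])

/-- The fundamental `∞`-groupoid of a topological space `M`: the singular simplicial
set `Sing M` with the distinguished filler of a horn `h` given by the adjunct of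
`(adjunct of h) ∘ R(n,i)`. -/
noncomputable def ASingObj (R : HornRetractions) (M : TopCat.{0}) : AlgKan where
  carrier := TopCat.toSSet.obj M
  filler := fun n i hn h =>
    (sSetTopAdj.homEquiv Δ[n] M) (R.r n i hn ≫ (sSetTopAdj.homEquiv Λ[n, i] M).symm h)
  filler_spec := fun n i hn h => by
    rw [← Adjunction.homEquiv_naturality_left, ← Category.assoc, R.retraction,
      Category.id_comp, Equiv.apply_symm_apply]

/-- The fundamental `∞`-groupoid functor `ASing : Top ⥤ AlgKan` associated with the
chosen retractions. -/
noncomputable def ASing (R : HornRetractions) : TopCat.{0} ⥤ AlgKan where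
  obj M := ASingObj R M
  map {M N} f :=
    { map := TopCat.toSSet.map f
      preserves := fun n i hn h => by
        dsimp [ASingObj]
        rw [← Adjunction.homEquiv_naturality_right, Category.assoc]
        exact congrArg _ (congrArg _ (Adjunction.homEquiv_naturality_right_symm _ _ _).symm) }
  map_id M := AlgKan.Hom.ext (TopCat.toSSet.map_id M)
  map_comp f g := AlgKan.Hom.ext (TopCat.toSSet.map_comp f g)

/-- The index type of all horns of an algebraic Kan complex. -/
structure HornIndex (X : AlgKan) : Type where
  n : ℕ
  i : Fin (n + 1)
  hn : 1 ≤ n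
  h : (Λ[n, i] : SSet.{0}) ⟶ X.carrier

/-- The reduced geometric realization of an algebraic Kan complex: the coequalizer,
over all horns `h : Λ[n,i] ⟶ X`, of the realization of the distinguished filler of
`h` against the realization of `h` precomposed with the retraction `R(n,i)`. -/
noncomputable def realReducedObj (R : HornRetractions) (X : AlgKan) : TopCat.{0} :=
  coequalizer
    (Sigma.desc fun k : HornIndex X => SSet.toTop.map (X.filler k.i k.hn k.h))
    (Sigma.desc fun k : HornIndex X => R.r k.n k.i k.hn ≫ SSet.toTop.map k.h)

/-- The reduced geometric realization functor `|·|_r : AlgKan ⥤ Top`. -/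
noncomputable def realReduced (R : HornRetractions) : AlgKan ⥤ TopCat.{0} where
  obj X := realReducedObj R X
  map {X Y} f := coequalizer.desc (SSet.toTop.map f.map ≫ coequalizer.π _ _) (by
    apply Sigma.hom_ext
    intro k
    simp only [colimit.ι_desc_assoc, Cofan.mk_ι_app]
    have hp := congrArg SSet.toTop.map (f.preserves k.i k.hn k.h)
    simp only [Functor.map_comp] at hp
    refine ((reassoc_of% hp) _).trans ?_
    have h2 := Limits.Sigma.ι (fun k : HornIndex Y => SSet.toTop.obj Δ[k.n])
        (⟨k.n, k.i, k.hn, k.h ≫ f.map⟩ : HornIndex Y) ≫=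
      coequalizer.condition
        (Sigma.desc fun k : HornIndex Y => SSet.toTop.map (Y.filler k.i k.hn k.h))
        (Sigma.desc fun k : HornIndex Y => R.r k.n k.i k.hn ≫ SSet.toTop.map k.h)
    simp only [colimit.ι_desc_assoc, Cofan.mk_ι_app] at h2
    simp only [Functor.map_comp, Category.assoc] at h2 ⊢
    exact h2)
  map_id X := by
    dsimp only [realReducedObj]
    apply coequalizer.hom_ext
    simp [realReducedObj]
  map_comp f g := by
    dsimp only [realReducedObj]
    apply coequalizer.hom_ext
    simp [realReducedObj]
    exact (congrArg (fun t => SSet.toTop.map f.map ≫ t) (coequalizer.π_desc _ _).symm).trans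
      (Category.assoc _ _ _).symm

/-!
By Beck's monadicity theorem it suffices that `U_Q` reflects isomorphisms and that every
`U_Q`-split pair `f, g : A ⟶ B` has a coequalizer in `AlgQ` preserved by `U_Q`. If
`π : B → Z` is a split coequalizer of the underlying maps, with section `s`, then `Z` inherits
fillers from `B`: fill `h ≫ s` in `B` and project along `π`. The splitting identities make `π`
filler-preserving, and make the factorization `s ≫ k` of any filler-preserving `k`
coequalizing `f` and `g` filler-preserving as well.
-/

namespace AlgQ

def ofRetract (B : AlgQ) {Z : SSet.{0}} (q : B.carrier ⟶ Z) (s : Z ⟶ B.carrier)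
    (hsq : s ≫ q = 𝟙 Z) : AlgQ where
  carrier := Z
  filler _ i h0 hn h := B.filler i h0 hn (h ≫ s) ≫ q
  filler_spec _ i h0 hn h := by
    rw [← Category.assoc, B.filler_spec, Category.assoc, hsq, Category.comp_id]

section Retract

variable {B : AlgQ} {Z : SSet.{0}} {q : B.carrier ⟶ Z} {s : Z ⟶ B.carrier} (hsq : s ≫ q = 𝟙 Z)

def toOfRetract (hq : ∀ ⦃n : ℕ⦄ (i : Fin (n + 1)) (h0 : 0 < i.val) (hn : i.val < n)
      (h : (Λ[n, i] : SSet.{0}) ⟶ B.carrier),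
      B.filler i h0 hn h ≫ q = B.filler i h0 hn (h ≫ q ≫ s) ≫ q) :
    B ⟶ ofRetract B q s hsq :=
  ⟨q, fun _ i h0 hn h =>
    (hq i h0 hn h).trans (congrArg (B.filler i h0 hn · ≫ q) (Category.assoc h q s).symm)⟩

def fromOfRetract {W : AlgQ} (k : B ⟶ W) (hk : q ≫ s ≫ k.map = k.map) :
    ofRetract B q s hsq ⟶ W :=
  ⟨s ≫ k.map, fun _ i h0 hn h => by
    change (B.filler i h0 hn (h ≫ s) ≫ q) ≫ s ≫ k.map = _
    rw [Category.assoc, hk, k.preserves]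
    exact congrArg _ (Category.assoc h s k.map)⟩

end Retract

section SplitCoequalizer

variable {A B : AlgQ} {f g : A ⟶ B} {Z : SSet.{0}} {π : B.carrier ⟶ Z}
  (hs : IsSplitCoequalizer f.map g.map π)

include hs in
lemma filler_comp_of_isSplitCoequalizer ⦃n : ℕ⦄ (i : Fin (n + 1)) (h0 : 0 < i.val)
    (hn : i.val < n) (h : (Λ[n, i] : SSet.{0}) ⟶ B.carrier) :
    B.filler i h0 hn h ≫ π = B.filler i h0 hn (h ≫ π ≫ hs.rightSection) ≫ π := by
  have hh : h = (h ≫ hs.leftSection) ≫ g.map := by simp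
  calc B.filler i h0 hn h ≫ π
      = A.filler i h0 hn (h ≫ hs.leftSection) ≫ g.map ≫ π := by
        rw [← Category.assoc, g.preserves, ← hh]
    _ = A.filler i h0 hn (h ≫ hs.leftSection) ≫ f.map ≫ π := by rw [hs.condition]
    _ = B.filler i h0 hn (h ≫ π ≫ hs.rightSection) ≫ π := by
        rw [← Category.assoc, f.preserves, Category.assoc, hs.leftSection_top]

def splitCoequalizerCofork : Cofork f g :=
  Cofork.ofπ (toOfRetract hs.rightSection_π (filler_comp_of_isSplitCoequalizer hs))
    (Hom.ext hs.condition)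

def isColimitSplitCoequalizerCofork : IsColimit (splitCoequalizerCofork hs) :=
  Cofork.IsColimit.mk' _ fun k =>
    have hk : π ≫ hs.rightSection ≫ k.π.map = k.π.map := by
      have hfg : f.map ≫ k.π.map = g.map ≫ k.π.map := congrArg Hom.map k.condition
      rw [← Category.assoc, ← hs.leftSection_top, Category.assoc, hfg, ← Category.assoc,
        hs.leftSection_bottom, Category.id_comp]
    ⟨fromOfRetract hs.rightSection_π k.π hk, Hom.ext hk, fun {m} hm => Hom.ext <|
      (hs.rightSection_π_assoc m.map).symm.trans (congrArg (hs.rightSection ≫ ·.map) hm)⟩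

end SplitCoequalizer

end AlgQ

instance : UQ.ReflectsIsomorphisms where
  reflects {X Y} f (_ : IsIso f.map) := by
    let finv : Y ⟶ X := ⟨inv f.map, fun _ i h0 hn h => by
      rw [← cancel_mono f.map, f.preserves]
      simp⟩
    exact ⟨finv, AlgQ.Hom.ext (by simp [finv]), AlgQ.Hom.ext (by simp [finv])⟩

instance : Monad.HasCoequalizerOfIsSplitPair UQ :=
  ⟨fun f g _ => HasColimit.mk ⟨_, AlgQ.isColimitSplitCoequalizerCofork
    (HasSplitCoequalizer.isSplitCoequalizer (UQ.map f) (UQ.map g))⟩⟩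

instance : Monad.PreservesColimitOfIsSplitPair UQ :=
  ⟨fun f g _ =>
    let hs := HasSplitCoequalizer.isSplitCoequalizer (UQ.map f) (UQ.map g)
    preservesColimit_of_preserves_colimit_cocone (AlgQ.isColimitSplitCoequalizerCofork hs)
      ((isColimitMapCoconeCoforkEquiv UQ _).symm hs.isCoequalizer)⟩

/-- The adjunction `F_Q ⊣ U_Q` is monadic: the comparison functor
from `AlgQ` to the Eilenberg–Moore category of algebras for the monad
`T_Q = U_Q ∘ F_Q` on `sSet` is an equivalence of categories. -/
theorem algQ_monadic (FQ : SSet.{0} ⥤ AlgQ) (adj : FQ ⊣ UQ) :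
    (Monad.comparison adj).IsEquivalence :=
  (Monad.monadicOfHasPreservesGSplitCoequalizersOfReflectsIsomorphisms adj).eqv

end AlgebraicModels
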